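/- Let s ∈ [0,T]. The cone L_b⁰ is dense in L⁰_{1,∞} with respect to L⁰(F_s)-Fatou convergence: if ξ ∈ L⁰_{1,∞} with ξ ⪰ (−M_s¹,−M_s²) for some (M_s¹,M_s²) ∈ L¹_+(F_s,Q)×L^∞_+(F_s,Q), then the sequence ξ_n := ξ⁺ − (ξ⁻ ∧ n) satisfies ξ_n ∈ L_b⁰ for all n ∈ ℕ, ξ_n ⪰ (−M_s¹,−M_s²) for all n, and ξ_n → ξ almost surely. -/

import Mathlib

open MeasureTheory Filter Set

noncomputable section

namespace TransactionCosts

variable {Ω : Type*} [m0 : MeasurableSpace Ω]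

/-- Market data: a filtered probability space satisfying (versions of) the usual
conditions, a strictly positive càdlàg adapted integrable price process `S` on `[0,T]`,
and proportional transaction costs `lam ∈ (0,1)`. -/
structure Market (Ω : Type*) [m0 : MeasurableSpace Ω] where
  P : Measure Ω
  probP : IsProbabilityMeasure P
  F : Filtration ℝ m0
  T : ℝ
  T_pos : 0 < T
  F_rightCont : ∀ t : ℝ,
    (F t : MeasurableSpace Ω) = ⨅ u : {u : ℝ // t < u}, (F u.1 : MeasurableSpace Ω)
  F0_trivial : ∀ A : Set Ω, MeasurableSet[F 0] A → P A = 0 ∨ P A = 1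
  FT_full : (F T : MeasurableSpace Ω) = m0
  S : ℝ → Ω → ℝ
  S_adapted : ∀ t : ℝ, StronglyMeasurable[F t] (S t)
  S_pos : ∀ t ω, 0 < S t ω
  S_rightCont : ∀ ω t, ContinuousWithinAt (fun u => S u ω) (Ici t) t
  S_leftLim : ∀ ω t, ∃ l : ℝ, Tendsto (fun u => S u ω) (nhdsWithin t (Iio t)) (nhds l)
  S_int : ∀ t : ℝ, Integrable (S t) P
  lam : ℝ
  lam_pos : 0 < lam
  lam_lt_one : lam < 1

/-- Generators of the predictable σ-algebra: stochastic intervals `(a,b] × A`, `A ∈ F_a`. -/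
def predictableSets (F : Filtration ℝ m0) : Set (Set (ℝ × Ω)) :=
  {E | ∃ (a b : ℝ) (A : Set Ω), MeasurableSet[F a] A ∧ E = Ioc a b ×ˢ A}

/-- A process is predictable if it is measurable for the predictable σ-algebra. -/
def Predictable (F : Filtration ℝ m0) (f : ℝ → Ω → ℝ) : Prop :=
  Measurable[MeasurableSpace.generateFrom (predictableSets F)] (Function.uncurry f)

/-- `f` is a martingale under `Q` on the time interval `[s,t]`. -/
def MartingaleOn (F : Filtration ℝ m0) (Q : Measure Ω) (f : ℝ → Ω → ℝ) (s t : ℝ) : Prop :=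
  (∀ u ∈ Icc s t, StronglyMeasurable[F u] (f u)) ∧
  (∀ u ∈ Icc s t, Integrable (f u) Q) ∧
  ∀ u ∈ Icc s t, ∀ v ∈ Icc s t, u ≤ v →
    MeasureTheory.condExp (F u) Q (f v) =ᵐ[Q] f u

/-- The process `f` stopped at the stopping time `τ ∨ s`. -/
def stoppedAt (f : ℝ → Ω → ℝ) (s : ℝ) (τ : Ω → ℝ) : ℝ → Ω → ℝ :=
  fun u ω => f (min u (max s (τ ω))) ω

/-- `f` is a local martingale under `Q` on the time interval `[s,t]`. -/
def LocalMartingaleOn (F : Filtration ℝ m0) (Q : Measure Ω) (f : ℝ → Ω → ℝ) (s t : ℝ) :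
    Prop :=
  (∀ u ∈ Icc s t, StronglyMeasurable[F u] (f u)) ∧
  ∃ τ : ℕ → Ω → ℝ, (∀ n, IsStoppingTime F (fun ω => ((τ n ω : ℝ) : WithTop ℝ))) ∧
    (∀ n ω, τ n ω ≤ τ (n + 1) ω) ∧
    (∀ᵐ ω ∂Q, ∃ N : ℕ, ∀ n ≥ N, t ≤ τ n ω) ∧
    ∀ n, MartingaleOn F Q (stoppedAt f s (τ n)) s t

/-- `(Q, Stil)` is a consistent price system on `[s,t]` for transaction costs `lam'`. -/
def IsCPS (M : Market Ω) (lam' s t : ℝ) (Q : Measure Ω) (Stil : ℝ → Ω → ℝ) : Prop :=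
  IsProbabilityMeasure Q ∧ Q ≪ M.P ∧ M.P ≪ Q ∧
  MartingaleOn M.F Q Stil s t ∧
  ∀ u ∈ Icc s t, ∀ᵐ ω ∂M.P,
    (1 - lam') * M.S u ω ≤ Stil u ω ∧ Stil u ω ≤ (1 + lam') * M.S u ω

/-- `(Q, Stil)` is a consistent local price system on `[s,t]` for transaction costs `lam'`. -/
def IsLocalCPS (M : Market Ω) (lam' s t : ℝ) (Q : Measure Ω) (Stil : ℝ → Ω → ℝ) : Prop :=
  IsProbabilityMeasure Q ∧ Q ≪ M.P ∧ M.P ≪ Q ∧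
  LocalMartingaleOn M.F Q Stil s t ∧
  ∀ u ∈ Icc s t, ∀ᵐ ω ∂M.P,
    (1 - lam') * M.S u ω ≤ Stil u ω ∧ Stil u ω ≤ (1 + lam') * M.S u ω

/-- `CPS(s,T)`, as a set of pairs. -/
def CPS (M : Market Ω) (s : ℝ) : Set (Measure Ω × (ℝ → Ω → ℝ)) :=
  {p | IsCPS M M.lam s M.T p.1 p.2}

/-- `CPS_loc(s,T)`, as a set of pairs. -/
def CPSloc (M : Market Ω) (s : ℝ) : Set (Measure Ω × (ℝ → Ω → ℝ)) :=
  {p | IsLocalCPS M M.lam s M.T p.1 p.2}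

/-- The set `Q(s,T)` of measures occurring in consistent price systems. -/
def Qset (M : Market Ω) (s : ℝ) : Set (Measure Ω) :=
  {Q | ∃ Stil, IsCPS M M.lam s M.T Q Stil}

/-- The set `Q_loc(s,T)` of measures occurring in consistent local price systems. -/
def QsetLoc (M : Market Ω) (s : ℝ) : Set (Measure Ω) :=
  {Q | ∃ Stil, IsLocalCPS M M.lam s M.T Q Stil}

/-- `X ∈ L¹(F_s, Q)` : `F_s`-measurable and integrable under every `Q ∈ Q(s,T)`. -/
def MemL1Q (M : Market Ω) (s : ℝ) (X : Ω → ℝ) : Prop :=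
  StronglyMeasurable[M.F s] X ∧ ∀ Q ∈ Qset M s, Integrable X Q

/-- `X ∈ L¹₊(F_s, Q)`. -/
def MemL1plusQ (M : Market Ω) (s : ℝ) (X : Ω → ℝ) : Prop :=
  MemL1Q M s X ∧ ∀ᵐ ω ∂M.P, 0 ≤ X ω

/-- `X ∈ L^∞(F_s, Q)` : `F_s`-measurable and (essentially) bounded. -/
def MemLinfQ (M : Market Ω) (s : ℝ) (X : Ω → ℝ) : Prop :=
  StronglyMeasurable[M.F s] X ∧ ∃ C : ℝ, ∀ᵐ ω ∂M.P, |X ω| ≤ C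

/-- `X ∈ L^∞₊(F_s, Q)`. -/
def MemLinfplusQ (M : Market Ω) (s : ℝ) (X : Ω → ℝ) : Prop :=
  MemLinfQ M s X ∧ ∀ᵐ ω ∂M.P, 0 ≤ X ω

/-- `X ∈ L¹(F_s, Q_loc)`. -/
def MemL1Qloc (M : Market Ω) (s : ℝ) (X : Ω → ℝ) : Prop :=
  StronglyMeasurable[M.F s] X ∧ ∀ Q ∈ QsetLoc M s, Integrable X Q

/-- `X ∈ L¹₊(F_s, Q_loc)`. -/
def MemL1plusQloc (M : Market Ω) (s : ℝ) (X : Ω → ℝ) : Prop :=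
  MemL1Qloc M s X ∧ ∀ᵐ ω ∂M.P, 0 ≤ X ω

/-- The solvency cone `K_t(ω)`, generated by `(1+λ)S e₁ - e₂` and `-e₁ + e₂/((1-λ)S)`. -/
def solvCone (lam St : ℝ) : Set (ℝ × ℝ) :=
  {x | ∃ a b : ℝ, 0 ≤ a ∧ 0 ≤ b ∧
    x = (a * ((1 + lam) * St) - b, -a + b / ((1 - lam) * St))}

/-- The (positive) polar cone `{y : ⟨x,y⟩ ≥ 0 ∀ x ∈ C}`. -/
def polarCone (C : Set (ℝ × ℝ)) : Set (ℝ × ℝ) :=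
  {y | ∀ x ∈ C, 0 ≤ x.1 * y.1 + x.2 * y.2}

/-- Euclidean inner product on `ℝ²`. -/
def dot (x y : ℝ × ℝ) : ℝ := x.1 * y.1 + x.2 * y.2

/-- `Z ∈ L¹(K_T^*; F_T, P)`. -/
def MemL1Polar (M : Market Ω) (Z : Ω → ℝ × ℝ) : Prop :=
  AEStronglyMeasurable Z M.P ∧ Integrable (fun ω => (Z ω).1) M.P ∧
  Integrable (fun ω => (Z ω).2) M.P ∧
  ∀ᵐ ω ∂M.P, Z ω ∈ polarCone (solvCone M.lam (M.S M.T ω))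

/-- Liquidation value at time `t` of the position `x = (x¹, x²)`. -/
def liq (M : Market Ω) (t : ℝ) (x : ℝ × ℝ) (ω : Ω) : ℝ :=
  x.1 + max x.2 0 * ((1 - M.lam) * M.S t ω) - max (-x.2) 0 * ((1 + M.lam) * M.S t ω)

/-- `φ ⪰ ψ` : the portfolio `φ - ψ` can be liquidated to the zero portfolio at time `T`. -/
def Succeq (M : Market Ω) (φ ψ : Ω → ℝ × ℝ) : Prop :=
  ∀ᵐ ω ∂M.P, 0 ≤ liq M M.T (φ ω - ψ ω) ω

/-- A self-financing trading strategy on `[s,T]`: predictable, of finite variation, with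
the Jordan–Hahn decompositions (encoded by the pathwise measures `μ1u, μ1d, μ2u, μ2d`)
satisfying `dφ¹ ≤ (1-λ)S dφ^{2,↓} - (1+λ)S dφ^{2,↑}`. -/
def IsSelfFinancing (M : Market Ω) (s : ℝ) (φ : ℝ → Ω → ℝ × ℝ) : Prop :=
  Predictable M.F (fun t ω => (φ t ω).1) ∧ Predictable M.F (fun t ω => (φ t ω).2) ∧
  ∃ μ1u μ1d μ2u μ2d : Ω → Measure ℝ,
    (∀ ω, IsFiniteMeasure (μ1u ω)) ∧ (∀ ω, IsFiniteMeasure (μ1d ω)) ∧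
    (∀ ω, IsFiniteMeasure (μ2u ω)) ∧ (∀ ω, IsFiniteMeasure (μ2d ω)) ∧
    (∀ ω, ∀ t ∈ Icc s M.T,
      (φ t ω).1 = (φ s ω).1 + (μ1u ω (Ioc s t)).toReal - (μ1d ω (Ioc s t)).toReal ∧
      (φ t ω).2 = (φ s ω).2 + (μ2u ω (Ioc s t)).toReal - (μ2d ω (Ioc s t)).toReal) ∧
    ∀ ω, ∀ E : Set ℝ, MeasurableSet E → E ⊆ Icc s M.T →
      (μ1u ω E).toReal + ∫ t in E, (1 + M.lam) * M.S t ω ∂(μ2u ω) ≤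
      (μ1d ω E).toReal + ∫ t in E, (1 - M.lam) * M.S t ω ∂(μ2d ω)

/-- Liquidation value of the strategy `φ` at the random time `τ`. -/
def liqAtTime (M : Market Ω) (τ : Ω → ℝ) (φ : ℝ → Ω → ℝ × ℝ) (ω : Ω) : ℝ :=
  liq M (τ ω) (φ (τ ω) ω) ω

/-- `(M1, M2)`-admissibility in the numéraire-free sense. -/
def AdmissibleNFWith (M : Market Ω) (s : ℝ) (M1 M2 : Ω → ℝ) (φ : ℝ → Ω → ℝ × ℝ) : Prop :=
  ∀ τ : Ω → ℝ, IsStoppingTime M.F (fun ω => ((τ ω : ℝ) : WithTop ℝ)) → (∀ ω, τ ω ∈ Icc s M.T) →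
    ∀ᵐ ω ∂M.P, -M1 ω - M2 ω * M.S (τ ω) ω ≤ liqAtTime M τ φ ω

/-- Admissibility in the numéraire-free sense. -/
def AdmissibleNF (M : Market Ω) (s : ℝ) (φ : ℝ → Ω → ℝ × ℝ) : Prop :=
  ∃ M1 M2 : Ω → ℝ, MemL1plusQ M s M1 ∧ MemLinfplusQ M s M2 ∧
    AdmissibleNFWith M s M1 M2 φ

/-- `Ms`-admissibility in the numéraire-based sense. -/
def AdmissibleNBWith (M : Market Ω) (s : ℝ) (Ms : Ω → ℝ) (φ : ℝ → Ω → ℝ × ℝ) : Prop :=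
  ∀ τ : Ω → ℝ, IsStoppingTime M.F (fun ω => ((τ ω : ℝ) : WithTop ℝ)) → (∀ ω, τ ω ∈ Icc s M.T) →
    ∀ᵐ ω ∂M.P, -Ms ω ≤ liqAtTime M τ φ ω

/-- Admissibility in the numéraire-based sense. -/
def AdmissibleNB (M : Market Ω) (s : ℝ) (φ : ℝ → Ω → ℝ × ℝ) : Prop :=
  ∃ Ms : Ω → ℝ, MemL1plusQloc M s Ms ∧ AdmissibleNBWith M s Ms φ

/-- The set `A_{s,T}` of terminal values of admissible (numéraire-free) self-financing
strategies starting from the zero endowment. -/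
def Aset (M : Market Ω) (s : ℝ) : Set (Ω → ℝ × ℝ) :=
  {X | ∃ φ : ℝ → Ω → ℝ × ℝ, IsSelfFinancing M s φ ∧ (∀ ω, φ s ω = 0) ∧
    AdmissibleNF M s φ ∧ ∀ ω, φ M.T ω = X ω}

/-- The cone `L⁰_{1,∞}`. -/
def L01inf (M : Market Ω) (s : ℝ) : Set (Ω → ℝ × ℝ) :=
  {ξ | ∃ M1 M2 : Ω → ℝ, MemL1plusQ M s M1 ∧ MemLinfplusQ M s M2 ∧
    Succeq M ξ (fun ω => (-M1 ω, -M2 ω))}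

/-- The cone `L_b⁰`. -/
def Lb0 (M : Market Ω) : Set (Ω → ℝ × ℝ) :=
  {ξ | ∃ c : ℝ, 0 < c ∧ Succeq M ξ (fun _ => (-c, -c))}

/-- `g` is (a version of) the essential supremum of the family `(f i)_{i ∈ A}` under `P`. -/
def IsEssSupOn {ι : Type*} (P : Measure Ω) (A : Set ι) (f : ι → Ω → ℝ) (g : Ω → ℝ) : Prop :=
  (∀ i ∈ A, f i ≤ᵐ[P] g) ∧ ∀ h : Ω → ℝ, (∀ i ∈ A, f i ≤ᵐ[P] h) → g ≤ᵐ[P] h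

/-- `g` is (a version of) the essential infimum of the family `(f i)_{i ∈ A}` under `P`. -/
def IsEssInfOn {ι : Type*} (P : Measure Ω) (A : Set ι) (f : ι → Ω → ℝ) (g : Ω → ℝ) : Prop :=
  (∀ i ∈ A, g ≤ᵐ[P] f i) ∧ ∀ h : Ω → ℝ, (∀ i ∈ A, h ≤ᵐ[P] f i) → h ≤ᵐ[P] g

/-- The payoff `X_T¹ + X_T² S̃_T` of the claim `X_T` under the price system `Stil`. -/
def payoff (M : Market Ω) (XT : Ω → ℝ × ℝ) (Stil : ℝ → Ω → ℝ) : Ω → ℝ :=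
  fun ω => (XT ω).1 + (XT ω).2 * Stil M.T ω

/-- The process `F^Q_t = E_Q[X_T¹ + X_T² S̃_T | F_t]`. -/
def FQ (M : Market Ω) (XT : Ω → ℝ × ℝ) (p : Measure Ω × (ℝ → Ω → ℝ)) (t : ℝ) : Ω → ℝ :=
  MeasureTheory.condExp (M.F t) p.1 (payoff M XT p.2)

/-- The value of `F^Q` at the random time `τ`. -/
def FQat (M : Market Ω) (XT : Ω → ℝ × ℝ) (p : Measure Ω × (ℝ → Ω → ℝ)) (τ : Ω → ℝ)
    (ω : Ω) : ℝ :=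
  FQ M XT p (τ ω) ω

/-- Assumption: `S` admits a consistent local price system for every `0 < λ' ≤ λ`. -/
def Assumption1 (M : Market Ω) : Prop :=
  ∀ lam' : ℝ, 0 < lam' → lam' ≤ M.lam → ∃ Q Stil, IsLocalCPS M lam' 0 M.T Q Stil

/-- Assumption: `S` admits a consistent price system for every `0 < λ' ≤ λ`. -/
def Assumption2 (M : Market Ω) : Prop :=
  ∀ lam' : ℝ, 0 < lam' → lam' ≤ M.lam → ∃ Q Stil, IsCPS M lam' 0 M.T Q Stil

/-- `σ̂ n` for `n ∈ ℕ ∪ {∞}` : the stopping time `σ_n`, resp. the limit `σ` for `n = ∞`. -/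
def sigmaHat (σ : ℕ → Ω → ℝ) (σ' : Ω → ℝ) (n : WithTop ℕ) : Ω → ℝ :=
  fun ω => if n = ⊤ then σ' ω else σ (n.untopD 0) ω

/-- Assumption A3 (local case), relative to the claim `XT` and the super-replication
price process `Fproc`. -/
def AssumptionA3 (M : Market Ω) (s : ℝ) (XT : Ω → ℝ × ℝ) (Fproc : ℝ → Ω → ℝ) : Prop :=
  ∃ Q0 ∈ QsetLoc M s,
    ∀ (σ : ℕ → Ω → ℝ) (σ' : Ω → ℝ),
      (∀ n, IsStoppingTime M.F (fun ω => ((σ n ω : ℝ) : WithTop ℝ))) →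
      (∀ n ω, σ n ω ∈ Icc 0 M.T) →
      (∀ n ω, σ (n + 1) ω ≤ σ n ω) →
      (∀ ω, Tendsto (fun n => σ n ω) atTop (nhds (σ' ω))) →
      ∃ pSeq : WithTop ℕ → ℕ → Measure Ω × (ℝ → Ω → ℝ),
        (∀ n k, IsLocalCPS M M.lam 0 M.T (pSeq n k).1 (pSeq n k).2) ∧
        (∀ ε : ℝ, 0 < ε → ∃ K : ℕ, ∀ k : ℕ, K ≤ k → ∀ n : WithTop ℕ,
          |(∫ ω, FQat M XT (pSeq n k) (sigmaHat σ σ' n) ω ∂Q0) -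
            ∫ ω, Fproc (sigmaHat σ σ' n ω) ω ∂Q0| < ε) ∧
        (∀ ε : ℝ, 0 < ε → ∀ k : ℕ,
          Q0 (⋃ N : ℕ, {ω | ∀ n : ℕ, N ≤ n → ∀ n0 : WithTop ℕ,
            |FQat M XT (pSeq n0 k) (σ n) ω - FQat M XT (pSeq n0 k) σ' ω| < ε}) = 1)

/-- Assumption A4 (non-local case), relative to the claim `XT` and the super-replication
price process `Fproc`. -/
def AssumptionA4 (M : Market Ω) (s : ℝ) (XT : Ω → ℝ × ℝ) (Fproc : ℝ → Ω → ℝ) : Prop :=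
  ∃ Q0 ∈ Qset M s,
    ∀ (σ : ℕ → Ω → ℝ) (σ' : Ω → ℝ),
      (∀ n, IsStoppingTime M.F (fun ω => ((σ n ω : ℝ) : WithTop ℝ))) →
      (∀ n ω, σ n ω ∈ Icc 0 M.T) →
      (∀ n ω, σ (n + 1) ω ≤ σ n ω) →
      (∀ ω, Tendsto (fun n => σ n ω) atTop (nhds (σ' ω))) →
      ∃ pSeq : WithTop ℕ → ℕ → Measure Ω × (ℝ → Ω → ℝ),
        (∀ n k, IsCPS M M.lam 0 M.T (pSeq n k).1 (pSeq n k).2) ∧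
        (∀ ε : ℝ, 0 < ε → ∃ K : ℕ, ∀ k : ℕ, K ≤ k → ∀ n : WithTop ℕ,
          |(∫ ω, FQat M XT (pSeq n k) (sigmaHat σ σ' n) ω ∂Q0) -
            ∫ ω, Fproc (sigmaHat σ σ' n ω) ω ∂Q0| < ε) ∧
        (∀ ε : ℝ, 0 < ε → ∀ k : ℕ,
          Q0 (⋃ N : ℕ, {ω | ∀ n : ℕ, N ≤ n → ∀ n0 : WithTop ℕ,
            |FQat M XT (pSeq n0 k) (σ n) ω - FQat M XT (pSeq n0 k) σ' ω| < ε}) = 1)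

/-- The set `Z(s,T)` (membership predicate). -/
def MemZ (M : Market Ω) (s : ℝ) (Z : ℝ → Ω → ℝ × ℝ) : Prop :=
  MartingaleOn M.F M.P (fun t ω => (Z t ω).1) s M.T ∧
  MartingaleOn M.F M.P (fun t ω => (Z t ω).2) s M.T ∧
  ∀ t ∈ Icc s M.T, ∀ᵐ ω ∂M.P,
    Z t ω ∈ polarCone (solvCone M.lam (M.S t ω)) ∧ Z t ω ≠ 0

/-- The set `Z_loc(s,T)` (membership predicate). -/
def MemZloc (M : Market Ω) (s : ℝ) (Z : ℝ → Ω → ℝ × ℝ) : Prop :=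
  MartingaleOn M.F M.P (fun t ω => (Z t ω).1) s M.T ∧
  LocalMartingaleOn M.F M.P (fun t ω => (Z t ω).2) s M.T ∧
  ∀ t ∈ Icc s M.T, ∀ᵐ ω ∂M.P,
    Z t ω ∈ polarCone (solvCone M.lam (M.S t ω)) ∧ Z t ω ≠ 0

/-- The measure `Q(Z)` with density `Z¹_T / E_P[Z¹_T]` with respect to `P`. -/
def QofZ (M : Market Ω) (Z : ℝ → Ω → ℝ × ℝ) : Measure Ω :=
  M.P.withDensity fun ω => ENNReal.ofReal ((Z M.T ω).1 / ∫ ω', (Z M.T ω').1 ∂M.P)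

lemma max_sub_min_negPart_eq_max {c : ℝ} (x : ℝ) (hc : 0 ≤ c) :
    max x 0 - min (max (-x) 0) c = max x (-c) := by
  simp only [max_def, min_def]
  split_ifs <;> linarith

lemma tendsto_max_neg_natCast (x : ℝ) : Tendsto (fun n : ℕ => max x (-n)) atTop (nhds x) := by
  refine tendsto_const_nhds.congr' ?_
  filter_upwards [tendsto_natCast_atTop_atTop.eventually_ge_atTop (-x)] with n hn
  exact (max_eq_left (neg_le.1 hn)).symm

lemma liq_mono (M : Market Ω) (t : ℝ) (ω : Ω) {x y : ℝ × ℝ} (h : x ≤ y) :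
    liq M t x ω ≤ liq M t y ω := by
  have hS := M.S_pos t ω
  have hsell : 0 ≤ (1 - M.lam) * M.S t ω := mul_nonneg (by linarith [M.lam_lt_one]) hS.le
  have hbuy : 0 ≤ (1 + M.lam) * M.S t ω := mul_nonneg (by linarith [M.lam_pos]) hS.le
  unfold liq
  gcongr
  exacts [h.1, h.2, h.2]

lemma liq_nonneg (M : Market Ω) (t : ℝ) (ω : Ω) {x : ℝ × ℝ} (h : 0 ≤ x) :
    0 ≤ liq M t x ω := by
  simpa [liq] using liq_mono M t ω h

lemma succeq_of_le (M : Market Ω) {φ ψ : Ω → ℝ × ℝ} (h : ∀ ω, ψ ω ≤ φ ω) : Succeq M φ ψ :=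
  Eventually.of_forall fun ω => liq_nonneg M M.T ω (sub_nonneg.2 (h ω))

lemma Succeq.mono_left {M : Market Ω} {φ φ' ψ : Ω → ℝ × ℝ} (h : Succeq M φ ψ)
    (hφ : ∀ ω, φ ω ≤ φ' ω) : Succeq M φ' ψ :=
  h.mono fun ω hω => hω.trans (liq_mono M M.T ω (sub_le_sub_right (hφ ω) _))

theorem stmt17_general (M : Market Ω)
    (ξ : Ω → ℝ × ℝ) (M1 M2 : Ω → ℝ)
    (hξ : Succeq M ξ (fun ω => (-M1 ω, -M2 ω))) :
    (∀ n : ℕ,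
      (fun ω => (max (ξ ω).1 0 - min (max (-(ξ ω).1) 0) (n : ℝ),
                 max (ξ ω).2 0 - min (max (-(ξ ω).2) 0) (n : ℝ))) ∈ Lb0 M ∧
      Succeq M
        (fun ω => (max (ξ ω).1 0 - min (max (-(ξ ω).1) 0) (n : ℝ),
                   max (ξ ω).2 0 - min (max (-(ξ ω).2) 0) (n : ℝ)))
        (fun ω => (-M1 ω, -M2 ω))) ∧
    ∀ᵐ ω ∂M.P,
      Tendsto (fun n : ℕ =>
          ((max (ξ ω).1 0 - min (max (-(ξ ω).1) 0) (n : ℝ),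
            max (ξ ω).2 0 - min (max (-(ξ ω).2) 0) (n : ℝ)) : ℝ × ℝ))
        atTop (nhds (ξ ω)) := by
  simp only [max_sub_min_negPart_eq_max _ (Nat.cast_nonneg _)]
  refine ⟨fun n => ⟨⟨n + 1, by positivity, succeq_of_le M fun ω => ⟨?_, ?_⟩⟩,
    hξ.mono_left fun ω => ⟨le_max_left _ _, le_max_left _ _⟩⟩,
    Eventually.of_forall fun ω => (tendsto_max_neg_natCast _).prodMk_nhds
      (tendsto_max_neg_natCast _)⟩
  all_goals exact (neg_le_neg (le_add_of_nonneg_right zero_le_one)).trans (le_max_right _ _)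

/-- `L_b⁰` is dense in `L⁰_{1,∞}` for `L⁰(F_s)`-Fatou convergence. -/
theorem stmt17 (M : Market Ω) (s : ℝ) (hs : s ∈ Icc 0 M.T)
    (ξ : Ω → ℝ × ℝ) (M1 M2 : Ω → ℝ)
    (hM1 : MemL1plusQ M s M1) (hM2 : MemLinfplusQ M s M2)
    (hξ : Succeq M ξ (fun ω => (-M1 ω, -M2 ω))) :
    (∀ n : ℕ,
      (fun ω => (max (ξ ω).1 0 - min (max (-(ξ ω).1) 0) (n : ℝ),
                 max (ξ ω).2 0 - min (max (-(ξ ω).2) 0) (n : ℝ))) ∈ Lb0 M ∧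
      Succeq M
        (fun ω => (max (ξ ω).1 0 - min (max (-(ξ ω).1) 0) (n : ℝ),
                   max (ξ ω).2 0 - min (max (-(ξ ω).2) 0) (n : ℝ)))
        (fun ω => (-M1 ω, -M2 ω))) ∧
    ∀ᵐ ω ∂M.P,
      Tendsto (fun n : ℕ =>
          ((max (ξ ω).1 0 - min (max (-(ξ ω).1) 0) (n : ℝ),
            max (ξ ω).2 0 - min (max (-(ξ ω).2) 0) (n : ℝ)) : ℝ × ℝ))
        atTop (nhds (ξ ω)) :=
  stmt17_general M ξ M1 M2 hξ

end TransactionCosts
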